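/- Let L be the set of real 6×6 matrices of the form [[a, b, −h, 0, d, e],[c, −a, 0, −h, f, g],[0, 0, a, b, 0, d],[0, 0, c, −a, 0, f],[0, 0, f, −d, 0, 2h],[0, 0, 0, 0, 0, 0]] with a,b,c,d,e,f,g,h ∈ ℝ. Then L is a Lie subalgebra of gl(6,ℝ) of dimension 8 over ℝ, and there is no injective Lie algebra homomorphism from L into gl(5,ℝ). (This is Turkowski's algebra L_{8.15}, whose radical is the nilpotent algebra A_{5.3} and whose minimal faithful matrix representation has dimension 6.) -/

import Mathlib

attribute [local instance 100] LieRing.ofAssociativeRing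

noncomputable def Mg (a b c d e f g h : ℝ) : Matrix (Fin 6) (Fin 6) ℝ :=
  !![a, b, -h, 0, d, e;
     c, -a, 0, -h, f, g;
     0, 0, a, b, 0, d;
     0, 0, c, -a, 0, f;
     0, 0, f, -d, 0, 2 * h;
     0, 0, 0, 0, 0, 0]

lemma six (i : Fin 6) : i = 0 ∨ i = 1 ∨ i = 2 ∨ i = 3 ∨ i = 4 ∨ i = 5 := by omega

lemma Mg_00 (a b c d e f g h : ℝ) : Mg a b c d e f g h 0 0 = a := rfl
lemma Mg_01 (a b c d e f g h : ℝ) : Mg a b c d e f g h 0 1 = b := rfl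
lemma Mg_02 (a b c d e f g h : ℝ) : Mg a b c d e f g h 0 2 = -h := rfl
lemma Mg_03 (a b c d e f g h : ℝ) : Mg a b c d e f g h 0 3 = 0 := rfl
lemma Mg_04 (a b c d e f g h : ℝ) : Mg a b c d e f g h 0 4 = d := rfl
lemma Mg_05 (a b c d e f g h : ℝ) : Mg a b c d e f g h 0 5 = e := rfl
lemma Mg_10 (a b c d e f g h : ℝ) : Mg a b c d e f g h 1 0 = c := rfl
lemma Mg_11 (a b c d e f g h : ℝ) : Mg a b c d e f g h 1 1 = -a := rfl
lemma Mg_12 (a b c d e f g h : ℝ) : Mg a b c d e f g h 1 2 = 0 := rfl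
lemma Mg_13 (a b c d e f g h : ℝ) : Mg a b c d e f g h 1 3 = -h := rfl
lemma Mg_14 (a b c d e f g h : ℝ) : Mg a b c d e f g h 1 4 = f := rfl
lemma Mg_15 (a b c d e f g h : ℝ) : Mg a b c d e f g h 1 5 = g := rfl
lemma Mg_20 (a b c d e f g h : ℝ) : Mg a b c d e f g h 2 0 = 0 := rfl
lemma Mg_21 (a b c d e f g h : ℝ) : Mg a b c d e f g h 2 1 = 0 := rfl
lemma Mg_22 (a b c d e f g h : ℝ) : Mg a b c d e f g h 2 2 = a := rfl
lemma Mg_23 (a b c d e f g h : ℝ) : Mg a b c d e f g h 2 3 = b := rfl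
lemma Mg_24 (a b c d e f g h : ℝ) : Mg a b c d e f g h 2 4 = 0 := rfl
lemma Mg_25 (a b c d e f g h : ℝ) : Mg a b c d e f g h 2 5 = d := rfl
lemma Mg_30 (a b c d e f g h : ℝ) : Mg a b c d e f g h 3 0 = 0 := rfl
lemma Mg_31 (a b c d e f g h : ℝ) : Mg a b c d e f g h 3 1 = 0 := rfl
lemma Mg_32 (a b c d e f g h : ℝ) : Mg a b c d e f g h 3 2 = c := rfl
lemma Mg_33 (a b c d e f g h : ℝ) : Mg a b c d e f g h 3 3 = -a := rfl
lemma Mg_34 (a b c d e f g h : ℝ) : Mg a b c d e f g h 3 4 = 0 := rfl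
lemma Mg_35 (a b c d e f g h : ℝ) : Mg a b c d e f g h 3 5 = f := rfl
lemma Mg_40 (a b c d e f g h : ℝ) : Mg a b c d e f g h 4 0 = 0 := rfl
lemma Mg_41 (a b c d e f g h : ℝ) : Mg a b c d e f g h 4 1 = 0 := rfl
lemma Mg_42 (a b c d e f g h : ℝ) : Mg a b c d e f g h 4 2 = f := rfl
lemma Mg_43 (a b c d e f g h : ℝ) : Mg a b c d e f g h 4 3 = -d := rfl
lemma Mg_44 (a b c d e f g h : ℝ) : Mg a b c d e f g h 4 4 = 0 := rfl
lemma Mg_45 (a b c d e f g h : ℝ) : Mg a b c d e f g h 4 5 = 2*h := rfl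
lemma Mg_50 (a b c d e f g h : ℝ) : Mg a b c d e f g h 5 0 = 0 := rfl
lemma Mg_51 (a b c d e f g h : ℝ) : Mg a b c d e f g h 5 1 = 0 := rfl
lemma Mg_52 (a b c d e f g h : ℝ) : Mg a b c d e f g h 5 2 = 0 := rfl
lemma Mg_53 (a b c d e f g h : ℝ) : Mg a b c d e f g h 5 3 = 0 := rfl
lemma Mg_54 (a b c d e f g h : ℝ) : Mg a b c d e f g h 5 4 = 0 := rfl
lemma Mg_55 (a b c d e f g h : ℝ) : Mg a b c d e f g h 5 5 = 0 := rfl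

set_option maxHeartbeats 1600000 in
theorem Mg_bracket (a1 b1 c1 d1 e1 f1 g1 h1 a2 b2 c2 d2 e2 f2 g2 h2 : ℝ) :
    Mg a1 b1 c1 d1 e1 f1 g1 h1 * Mg a2 b2 c2 d2 e2 f2 g2 h2
      - Mg a2 b2 c2 d2 e2 f2 g2 h2 * Mg a1 b1 c1 d1 e1 f1 g1 h1
    = Mg (b1*c2 - b2*c1) (2*(a1*b2 - a2*b1)) (-2*(a1*c2 - a2*c1)) (a1*d2 - a2*d1 + b1*f2 - b2*f1) (a1*e2 - a2*e1 + b1*g2 - b2*g1 + 3*(d1*h2 - d2*h1)) (-(a1*f2 - a2*f1) + c1*d2 - c2*d1) (-(a1*g2 - a2*g1) + c1*e2 - c2*e1 + 3*(f1*h2 - f2*h1)) (-(d1*f2 - d2*f1)) := by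
  ext i j
  rw [Matrix.sub_apply, Matrix.mul_apply, Matrix.mul_apply, Fin.sum_univ_six, Fin.sum_univ_six]
  rcases six i with rfl|rfl|rfl|rfl|rfl|rfl <;> rcases six j with rfl|rfl|rfl|rfl|rfl|rfl <;>
    simp only [Mg_00, Mg_01, Mg_02, Mg_03, Mg_04, Mg_05, Mg_10, Mg_11, Mg_12, Mg_13, Mg_14, Mg_15,
      Mg_20, Mg_21, Mg_22, Mg_23, Mg_24, Mg_25, Mg_30, Mg_31, Mg_32, Mg_33, Mg_34, Mg_35,
      Mg_40, Mg_41, Mg_42, Mg_43, Mg_44, Mg_45, Mg_50, Mg_51, Mg_52, Mg_53, Mg_54, Mg_55] <;>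
    ring

open Module LinearMap

/-- The structure constants of L_{8.15} as commutator relations in an associative ring. -/
structure Rels {R : Type*} [Ring R] (a b c d f h e g : R) : Prop where
  ab : a*b - b*a = b + b
  ac : a*c - c*a = -(c + c)
  bc : b*c - c*b = a
  ad : a*d - d*a = d
  bd : b*d - d*b = 0
  cd : c*d - d*c = f
  af : a*f - f*a = -f
  bf : b*f - f*b = d
  cf : c*f - f*c = 0
  ae : a*e - e*a = e
  be : b*e - e*b = 0
  ce : c*e - e*c = g
  ag : a*g - g*a = -g
  bg : b*g - g*b = e
  cg : c*g - g*c = 0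
  ah : a*h - h*a = 0
  bh : b*h - h*b = 0
  ch : c*h - h*c = 0
  df : d*f - f*d = -h
  dh : d*h - h*d = e + e + e
  fh : f*h - h*f = g + g + g
  de : d*e - e*d = 0
  dg : d*g - g*d = 0
  fe : f*e - e*f = 0
  fg : f*g - g*f = 0
  eg : e*g - g*e = 0
  eh : e*h - h*e = 0
  gh : g*h - h*g = 0

lemma negweight {R : Type*} [Ring R] (x y : R) (hxy : x*y - y*x = -y) :
    (-x)*y - y*(-x) = y := by
  have h2 : (-x)*y - y*(-x) = -(x*y - y*x) := by noncomm_ring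
  rw [h2, hxy, neg_neg]

section Beta

/-- 1×1 real matrices commute. -/
lemma mat1_comm (u v : Matrix (Fin 1) (Fin 1) ℝ) : u * v = v * u := by
  ext i j
  fin_cases i <;> fin_cases j <;>
    simp [Matrix.mul_apply, Fin.sum_univ_one, mul_comm]

/-- The key dimension-≤2 weight lemma, matrix version in dimension 2. -/
lemma beta2 (A B C X : Matrix (Fin 2) (Fin 2) ℝ) (w : ℝ)
    (hAB : A*B - B*A = B + B) (hAC : A*C - C*A = -(C + C)) (hBC : B*C - C*B = A)
    (hw : w = 1 ∨ w = -1) (hX : A*X - X*A = w • X) : X = 0 := by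
  have htr : Matrix.trace A = 0 := by
    rw [← hBC, Matrix.trace_sub, Matrix.trace_mul_comm B C, sub_self]
  set δ : ℝ := -(A.det) with hδ
  have hA2 : A * A = δ • 1 := by
    have h11 : A 1 1 = -(A 0 0) := by
      rw [Matrix.trace_fin_two] at htr; linarith
    have hd : δ = -(A 0 0 * A 1 1 - A 0 1 * A 1 0) := by rw [hδ, Matrix.det_fin_two]
    ext i j
    fin_cases i <;> fin_cases j <;>
      simp [Matrix.mul_apply, Fin.sum_univ_two, Matrix.one_apply, hd, h11] <;> ring
  have step : ∀ (Y : Matrix (Fin 2) (Fin 2) ℝ) (u : ℝ), u ≠ 0 →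
      A*Y - Y*A = u • Y → (4*δ - u^2) • Y = 0 := by
    intro Y u hu hY
    have s1 : δ • Y - A*Y*A = u • (A*Y) := by
      calc δ • Y - A*Y*A = A*(A*Y - Y*A) := by
            rw [mul_sub, ← mul_assoc, hA2, Matrix.smul_mul, one_mul, mul_assoc]
        _ = u • (A*Y) := by rw [hY, Matrix.mul_smul]
    have s2 : A*Y*A - δ • Y = u • (Y*A) := by
      calc A*Y*A - δ • Y = (A*Y - Y*A)*A := by
            rw [sub_mul, mul_assoc Y A A, hA2, Matrix.mul_smul, mul_one]
        _ = u • (Y*A) := by rw [hY, Matrix.smul_mul]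
    have hsum : u • (A*Y) + u • (Y*A) = 0 := by
      rw [← s1, ← s2]; abel
    have hanti : A*Y + Y*A = 0 := by
      have : u • (A*Y + Y*A) = 0 := by rw [smul_add]; exact hsum
      exact (smul_eq_zero.mp this).resolve_left hu
    have h2u : A*Y + A*Y = u • Y := by
      have := hY
      have hYA : Y*A = -(A*Y) := by linear_combination (norm := abel) hanti
      rw [hYA, sub_neg_eq_add] at this; exact this
    -- multiply h2u by A on the left
    have h3 : δ • Y + δ • Y = u • (A * Y) := by
      calc δ • Y + δ • Y = A*(A*Y) + A*(A*Y) := by rw [← mul_assoc, hA2, Matrix.smul_mul, one_mul]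
        _ = A*(A*Y + A*Y) := by rw [mul_add]
        _ = A*(u • Y) := by rw [h2u]
        _ = u • (A*Y) := by rw [Matrix.mul_smul]
    -- combine:  u • (u • Y) = u • (A*Y) + u • (A*Y) = 2 • etc
    have h4 : u • (u • Y) = (δ • Y + δ • Y) + (δ • Y + δ • Y) := by
      calc u • (u • Y) = u • (A*Y + A*Y) := by rw [h2u]
        _ = u • (A*Y) + u • (A*Y) := by rw [smul_add]
        _ = (δ • Y + δ • Y) + (δ • Y + δ • Y) := by rw [h3]
    have : (4*δ - u^2) • Y = (δ • Y + δ • Y) + (δ • Y + δ • Y) - u • (u • Y) := by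
      rw [smul_smul]; module
    rw [this, h4, sub_self]
  have hXw : (4*δ - w^2) • X = 0 := by
    refine step X w ?_ hX
    rcases hw with rfl | rfl <;> norm_num
  have hw2 : w^2 = 1 := by rcases hw with rfl | rfl <;> norm_num
  rw [hw2] at hXw
  by_cases hδ1 : 4*δ - 1 = 0
  · -- then 4δ - 4 = -3 ≠ 0, so B = C = 0, so A = 0, so X = 0
    have hB : B = 0 := by
      have := step B 2 (by norm_num) ?_
      · have h3 : (4*δ - 2^2) = -3 := by rw [show (2:ℝ)^2 = 4 by norm_num]; linarith
        rw [h3] at this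
        simpa using (smul_eq_zero.mp this).resolve_left (by norm_num)
      · rw [hAB]; module
    have hC : C = 0 := by
      have := step C (-2) (by norm_num) ?_
      · have h3 : (4*δ - (-2:ℝ)^2) = -3 := by rw [show ((-2):ℝ)^2 = 4 by norm_num]; linarith
        rw [h3] at this
        simpa using (smul_eq_zero.mp this).resolve_left (by norm_num)
      · rw [hAC]; module
    have hA : A = 0 := by rw [← hBC, hB, hC]; simp
    have := hX
    rw [hA, zero_mul, mul_zero, sub_zero] at this
    have : w • X = 0 := this.symm
    rcases hw with rfl | rfl <;> simpa using this
  · exact (smul_eq_zero.mp hXw).resolve_left hδ1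

variable {V : Type*} [AddCommGroup V] [Module ℝ V] [FiniteDimensional ℝ V]

/-- Endomorphisms of a space of dimension ≤ 1 commute. -/
lemma comm1 (hd : finrank ℝ V ≤ 1) (u v : Module.End ℝ V) : u * v = v * u := by
  interval_cases hn : finrank ℝ V
  · have : Subsingleton V := (finrank_zero_iff (R := ℝ)).mp hn
    ext x; exact Subsingleton.elim _ _
  · let bV := Module.finBasisOfFinrankEq ℝ V hn
    have := congrArg (LinearMap.toMatrixAlgEquiv bV).symm
      (mat1_comm (LinearMap.toMatrixAlgEquiv bV u) (LinearMap.toMatrixAlgEquiv bV v))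
    simpa [map_mul] using this

/-- The dimension-≤2 weight lemma: a weight-(±1) vector for an `sl₂`-like triple
acting on a space of dimension ≤ 2 vanishes. -/
lemma beta (hd : finrank ℝ V ≤ 2) (a b c x : Module.End ℝ V) (w : ℝ)
    (hab : a*b - b*a = b + b) (hac : a*c - c*a = -(c + c)) (hbc : b*c - c*b = a)
    (hw : w = 1 ∨ w = -1) (hx : a*x - x*a = w • x) : x = 0 := by
  by_cases hd1 : finrank ℝ V ≤ 1
  · -- a = 0 by commutativity, then x = ± (a x - x a) = 0
    have ha : a = 0 := by rw [← hbc, comm1 hd1 b c, sub_self]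
    rw [ha, zero_mul, mul_zero, sub_zero] at hx
    have : w • x = 0 := hx.symm
    rcases hw with rfl | rfl <;> simpa using this
  · have hn : finrank ℝ V = 2 := le_antisymm hd (by omega)
    let bV := Module.finBasisOfFinrankEq ℝ V hn
    set Φ := LinearMap.toMatrixAlgEquiv bV with hΦ
    have hx0 : Φ x = 0 := by
      refine beta2 (Φ a) (Φ b) (Φ c) (Φ x) w ?_ ?_ ?_ hw ?_
      · have := congrArg Φ hab; simpa [map_mul, map_sub, map_add] using this
      · have := congrArg Φ hac; simpa [map_mul, map_sub, map_add, map_neg] using this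
      · have := congrArg Φ hbc; simpa [map_mul, map_sub] using this
      · have := congrArg Φ hx; simpa [map_mul, map_sub, map_smul] using this
    have := congrArg Φ.symm hx0
    simpa using this

end Beta

section Nilp

variable {V : Type*} [AddCommGroup V] [Module ℝ V] [FiniteDimensional ℝ V]

/-- An operator `x` with `[a,x] = x` is nilpotent (eigenvalue-count argument on `ad a`). -/
lemma nilpotent_of_weight (a x : Module.End ℝ V) (hx : a*x - x*a = x) : IsNilpotent x := by
  have key : ∀ k : ℕ, a * x^k - x^k * a = (k : ℝ) • x^k := by
    intro k
    induction k with
    | zero => simp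
    | succ n ih =>
      have expand : a * x^(n+1) - x^(n+1) * a
          = (a*x - x*a)*x^n + x*(a*x^n - x^n*a) := by
        rw [pow_succ']; noncomm_ring
      rw [expand, hx, ih, mul_smul_comm, ← pow_succ']
      push_cast
      rw [add_smul, one_smul]
      abel
  by_contra hnp
  have hpow : ∀ k : ℕ, x^k ≠ 0 := by
    intro k hk
    exact hnp ⟨k, hk⟩
  set D := finrank ℝ (Module.End ℝ V) with hD
  set T : Module.End ℝ (Module.End ℝ V) :=
    LinearMap.mulLeft ℝ a - LinearMap.mulRight ℝ a with hT
  have heig : ∀ k : ℕ, T.HasEigenvector ((k : ℝ)) (x^k) := by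
    intro k
    refine ⟨?_, hpow k⟩
    rw [Module.End.mem_eigenspace_iff]
    show a * x^k - x^k * a = (k:ℝ) • x^k
    exact key k
  have hinj : Function.Injective (fun i : Fin (D+1) => ((i : ℕ) : ℝ)) := by
    intro i j hij
    have : ((i:ℕ):ℝ) = ((j:ℕ):ℝ) := hij
    exact Fin.ext (Nat.cast_injective this)
  have hli := T.eigenvectors_linearIndependent' (fun i : Fin (D+1) => ((i : ℕ) : ℝ))
    hinj (fun i => x^(i:ℕ)) (fun i => heig (i:ℕ))
  have hcard := hli.fintype_card_le_finrank
  simp only [Fintype.card_fin, ← hD] at hcard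
  omega

/-- A nilpotent chain argument: from any nonzero vector we reach a nonzero kernel vector. -/
lemma chain_to_ker (e : Module.End ℝ V) (he : IsNilpotent e) {u : V} (hu : u ≠ 0) :
    ∃ k : ℕ, (e^k) u ≠ 0 ∧ e ((e^k) u) = 0 := by
  obtain ⟨n, hn⟩ := he
  by_contra hcon
  push_neg at hcon
  have : ∀ k : ℕ, (e^k) u ≠ 0 := by
    intro k
    induction k with
    | zero => simpa using hu
    | succ m ih =>
      have h1 := hcon m ih
      have : (e^(m+1)) u = e ((e^m) u) := by rw [pow_succ']; rfl
      rw [this]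
      exact h1
  have := this n
  rw [hn] at this
  simp at this

/-- Two commuting nilpotent operators have a common nonzero kernel vector. -/
lemma common_ker (e g : Module.End ℝ V) (hc : e*g = g*e)
    (he : IsNilpotent e) (hg : IsNilpotent g) {u : V} (hu : u ≠ 0) :
    ∃ v : V, v ≠ 0 ∧ e v = 0 ∧ g v = 0 := by
  obtain ⟨k, hk1, hk2⟩ := chain_to_ker e he hu
  obtain ⟨j, hj1, hj2⟩ := chain_to_ker g hg hk1
  refine ⟨(g^j) ((e^k) u), hj1, ?_, hj2⟩
  have hcomm : e * g^j = g^j * e := Commute.pow_right hc j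
  have : e ((g^j) ((e^k) u)) = (g^j) (e ((e^k) u)) := by
    have := congrFun (congrArg DFunLike.coe hcomm) ((e^k) u)
    simpa using this
  rw [this, hk2, map_zero]

end Nilp
section Transfer

variable {V : Type*} [AddCommGroup V] [Module ℝ V]

namespace QuotTrans

variable (K : Submodule ℝ V)

lemma inv_add {x y : Module.End ℝ V} (hx : K ≤ K.comap x) (hy : K ≤ K.comap y) :
    K ≤ K.comap (x + y) := fun v hv => by
  simp only [Submodule.mem_comap, LinearMap.add_apply]
  exact K.add_mem (hx hv) (hy hv)

lemma inv_neg {x : Module.End ℝ V} (hx : K ≤ K.comap x) : K ≤ K.comap (-x) := fun v hv => by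
  simp only [Submodule.mem_comap, LinearMap.neg_apply]
  exact K.neg_mem (hx hv)

lemma inv_zero : K ≤ K.comap (0 : Module.End ℝ V) := fun v hv => by
  simp only [Submodule.mem_comap, LinearMap.zero_apply]
  exact K.zero_mem

lemma q_eqn {x y z : Module.End ℝ V} (hx : K ≤ K.comap x) (hy : K ≤ K.comap y)
    (hz : K ≤ K.comap z) (hrel : x*y - y*x = z) :
    Submodule.mapQ K K x hx * Submodule.mapQ K K y hy
      - Submodule.mapQ K K y hy * Submodule.mapQ K K x hx = Submodule.mapQ K K z hz := by
  refine Submodule.linearMap_qext _ ?_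
  ext v
  have hv := congrFun (congrArg DFunLike.coe hrel) v
  simp only [LinearMap.sub_apply, Module.End.mul_apply] at hv
  simp only [LinearMap.comp_apply, LinearMap.sub_apply, Module.End.mul_apply,
    Submodule.mapQ_apply, Submodule.mkQ_apply]
  rw [← Submodule.Quotient.mk_sub, hv]

lemma q_add {z w : Module.End ℝ V} (hz : K ≤ K.comap z) (hw : K ≤ K.comap w) :
    Submodule.mapQ K K (z + w) (inv_add K hz hw)
      = Submodule.mapQ K K z hz + Submodule.mapQ K K w hw := by
  refine Submodule.linearMap_qext _ ?_
  ext v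
  simp [Submodule.mapQ_apply]

lemma q_neg {z : Module.End ℝ V} (hz : K ≤ K.comap z) :
    Submodule.mapQ K K (-z) (inv_neg K hz) = - Submodule.mapQ K K z hz := by
  refine Submodule.linearMap_qext _ ?_
  ext v
  simp [Submodule.mapQ_apply]

lemma q_zero : Submodule.mapQ K K (0 : Module.End ℝ V) (inv_zero K) = 0 := by
  refine Submodule.linearMap_qext _ ?_
  ext v
  simp [Submodule.mapQ_apply]

lemma q_negadd {z w : Module.End ℝ V} (hz : K ≤ K.comap z) (hw : K ≤ K.comap w) :
    Submodule.mapQ K K (-(z + w)) (inv_neg K (inv_add K hz hw))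
      = -(Submodule.mapQ K K z hz + Submodule.mapQ K K w hw) := by
  rw [q_neg K (inv_add K hz hw), q_add K hz hw]

lemma q_add3 {z : Module.End ℝ V} (hz : K ≤ K.comap z) :
    Submodule.mapQ K K (z + z + z) (inv_add K (inv_add K hz hz) hz)
      = Submodule.mapQ K K z hz + Submodule.mapQ K K z hz + Submodule.mapQ K K z hz := by
  rw [q_add K (inv_add K hz hz) hz, q_add K hz hz]

end QuotTrans

open QuotTrans in
lemma Rels.quot {K : Submodule ℝ V} {a b c d f h e g : Module.End ℝ V}
    (Re : Rels a b c d f h e g)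
    (ia : K ≤ K.comap a) (ib : K ≤ K.comap b) (ic : K ≤ K.comap c) (id' : K ≤ K.comap d)
    (if' : K ≤ K.comap f) (ih' : K ≤ K.comap h) (ie' : K ≤ K.comap e) (ig : K ≤ K.comap g) :
    Rels (Submodule.mapQ K K a ia) (Submodule.mapQ K K b ib) (Submodule.mapQ K K c ic)
      (Submodule.mapQ K K d id') (Submodule.mapQ K K f if') (Submodule.mapQ K K h ih')
      (Submodule.mapQ K K e ie') (Submodule.mapQ K K g ig) where
  ab := (q_eqn K ia ib (inv_add K ib ib) Re.ab).trans (q_add K ib ib)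
  ac := (q_eqn K ia ic (inv_neg K (inv_add K ic ic)) Re.ac).trans (q_negadd K ic ic)
  bc := q_eqn K ib ic ia Re.bc
  ad := q_eqn K ia id' id' Re.ad
  bd := (q_eqn K ib id' (inv_zero K) Re.bd).trans (q_zero K)
  cd := q_eqn K ic id' if' Re.cd
  af := (q_eqn K ia if' (inv_neg K if') Re.af).trans (q_neg K if')
  bf := q_eqn K ib if' id' Re.bf
  cf := (q_eqn K ic if' (inv_zero K) Re.cf).trans (q_zero K)
  ae := q_eqn K ia ie' ie' Re.ae
  be := (q_eqn K ib ie' (inv_zero K) Re.be).trans (q_zero K)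
  ce := q_eqn K ic ie' ig Re.ce
  ag := (q_eqn K ia ig (inv_neg K ig) Re.ag).trans (q_neg K ig)
  bg := q_eqn K ib ig ie' Re.bg
  cg := (q_eqn K ic ig (inv_zero K) Re.cg).trans (q_zero K)
  ah := (q_eqn K ia ih' (inv_zero K) Re.ah).trans (q_zero K)
  bh := (q_eqn K ib ih' (inv_zero K) Re.bh).trans (q_zero K)
  ch := (q_eqn K ic ih' (inv_zero K) Re.ch).trans (q_zero K)
  df := (q_eqn K id' if' (inv_neg K ih') Re.df).trans (q_neg K ih')
  dh := (q_eqn K id' ih' (inv_add K (inv_add K ie' ie') ie') Re.dh).trans (q_add3 K ie')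
  fh := (q_eqn K if' ih' (inv_add K (inv_add K ig ig) ig) Re.fh).trans (q_add3 K ig)
  de := (q_eqn K id' ie' (inv_zero K) Re.de).trans (q_zero K)
  dg := (q_eqn K id' ig (inv_zero K) Re.dg).trans (q_zero K)
  fe := (q_eqn K if' ie' (inv_zero K) Re.fe).trans (q_zero K)
  fg := (q_eqn K if' ig (inv_zero K) Re.fg).trans (q_zero K)
  eg := (q_eqn K ie' ig (inv_zero K) Re.eg).trans (q_zero K)
  eh := (q_eqn K ie' ih' (inv_zero K) Re.eh).trans (q_zero K)
  gh := (q_eqn K ig ih' (inv_zero K) Re.gh).trans (q_zero K)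

namespace ResTrans

variable (p : Submodule ℝ V)

lemma rinv_add {x y : Module.End ℝ V} (hx : ∀ v ∈ p, x v ∈ p) (hy : ∀ v ∈ p, y v ∈ p) :
    ∀ v ∈ p, (x + y) v ∈ p := fun v hv => by
  simp only [LinearMap.add_apply]; exact p.add_mem (hx v hv) (hy v hv)

lemma rinv_neg {x : Module.End ℝ V} (hx : ∀ v ∈ p, x v ∈ p) : ∀ v ∈ p, (-x) v ∈ p :=
  fun v hv => by simp only [LinearMap.neg_apply]; exact p.neg_mem (hx v hv)

lemma rinv_zero : ∀ v ∈ p, (0 : Module.End ℝ V) v ∈ p := fun v _ => by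
  simp only [LinearMap.zero_apply]; exact p.zero_mem

lemma r_eqn {x y z : Module.End ℝ V} (hx : ∀ v ∈ p, x v ∈ p) (hy : ∀ v ∈ p, y v ∈ p)
    (hz : ∀ v ∈ p, z v ∈ p) (hrel : x*y - y*x = z) :
    x.restrict hx * y.restrict hy - y.restrict hy * x.restrict hx = z.restrict hz := by
  ext v
  have hv := congrFun (congrArg DFunLike.coe hrel) (v : V)
  simp only [LinearMap.sub_apply, Module.End.mul_apply] at hv
  simp only [LinearMap.sub_apply, Module.End.mul_apply, LinearMap.restrict_coe_apply,
    AddSubgroupClass.coe_sub]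
  rw [← hv]

lemma r_add {z w : Module.End ℝ V} (hz : ∀ v ∈ p, z v ∈ p) (hw : ∀ v ∈ p, w v ∈ p) :
    (z + w).restrict (rinv_add p hz hw) = z.restrict hz + w.restrict hw := by
  ext v; simp

lemma r_neg {z : Module.End ℝ V} (hz : ∀ v ∈ p, z v ∈ p) :
    (-z).restrict (rinv_neg p hz) = - z.restrict hz := by
  ext v; simp

lemma r_zero : (0 : Module.End ℝ V).restrict (rinv_zero p) = 0 := by
  ext v; simp

lemma r_negadd {z w : Module.End ℝ V} (hz : ∀ v ∈ p, z v ∈ p) (hw : ∀ v ∈ p, w v ∈ p) :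
    (-(z + w)).restrict (rinv_neg p (rinv_add p hz hw)) = -(z.restrict hz + w.restrict hw) := by
  rw [r_neg p (rinv_add p hz hw), r_add p hz hw]

lemma r_add3 {z : Module.End ℝ V} (hz : ∀ v ∈ p, z v ∈ p) :
    (z + z + z).restrict (rinv_add p (rinv_add p hz hz) hz)
      = z.restrict hz + z.restrict hz + z.restrict hz := by
  rw [r_add p (rinv_add p hz hz) hz, r_add p hz hz]

end ResTrans

open ResTrans in
lemma Rels.restrict {p : Submodule ℝ V} {a b c d f h e g : Module.End ℝ V}
    (Re : Rels a b c d f h e g)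
    (ia : ∀ v ∈ p, a v ∈ p) (ib : ∀ v ∈ p, b v ∈ p) (ic : ∀ v ∈ p, c v ∈ p)
    (id' : ∀ v ∈ p, d v ∈ p) (if' : ∀ v ∈ p, f v ∈ p) (ih' : ∀ v ∈ p, h v ∈ p)
    (ie' : ∀ v ∈ p, e v ∈ p) (ig : ∀ v ∈ p, g v ∈ p) :
    Rels (a.restrict ia) (b.restrict ib) (c.restrict ic) (d.restrict id') (f.restrict if')
      (h.restrict ih') (e.restrict ie') (g.restrict ig) where
  ab := (r_eqn p ia ib (rinv_add p ib ib) Re.ab).trans (r_add p ib ib)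
  ac := (r_eqn p ia ic (rinv_neg p (rinv_add p ic ic)) Re.ac).trans (r_negadd p ic ic)
  bc := r_eqn p ib ic ia Re.bc
  ad := r_eqn p ia id' id' Re.ad
  bd := (r_eqn p ib id' (rinv_zero p) Re.bd).trans (r_zero p)
  cd := r_eqn p ic id' if' Re.cd
  af := (r_eqn p ia if' (rinv_neg p if') Re.af).trans (r_neg p if')
  bf := r_eqn p ib if' id' Re.bf
  cf := (r_eqn p ic if' (rinv_zero p) Re.cf).trans (r_zero p)
  ae := r_eqn p ia ie' ie' Re.ae
  be := (r_eqn p ib ie' (rinv_zero p) Re.be).trans (r_zero p)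
  ce := r_eqn p ic ie' ig Re.ce
  ag := (r_eqn p ia ig (rinv_neg p ig) Re.ag).trans (r_neg p ig)
  bg := r_eqn p ib ig ie' Re.bg
  cg := (r_eqn p ic ig (rinv_zero p) Re.cg).trans (r_zero p)
  ah := (r_eqn p ia ih' (rinv_zero p) Re.ah).trans (r_zero p)
  bh := (r_eqn p ib ih' (rinv_zero p) Re.bh).trans (r_zero p)
  ch := (r_eqn p ic ih' (rinv_zero p) Re.ch).trans (r_zero p)
  df := (r_eqn p id' if' (rinv_neg p ih') Re.df).trans (r_neg p ih')
  dh := (r_eqn p id' ih' (rinv_add p (rinv_add p ie' ie') ie') Re.dh).trans (r_add3 p ie')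
  fh := (r_eqn p if' ih' (rinv_add p (rinv_add p ig ig) ig) Re.fh).trans (r_add3 p ig)
  de := (r_eqn p id' ie' (rinv_zero p) Re.de).trans (r_zero p)
  dg := (r_eqn p id' ig (rinv_zero p) Re.dg).trans (r_zero p)
  fe := (r_eqn p if' ie' (rinv_zero p) Re.fe).trans (r_zero p)
  fg := (r_eqn p if' ig (rinv_zero p) Re.fg).trans (r_zero p)
  eg := (r_eqn p ie' ig (rinv_zero p) Re.eg).trans (r_zero p)
  eh := (r_eqn p ie' ih' (rinv_zero p) Re.eh).trans (r_zero p)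
  gh := (r_eqn p ig ih' (rinv_zero p) Re.gh).trans (r_zero p)

namespace DualTrans

/-- The contragredient operator. -/
noncomputable def T (x : Module.End ℝ V) : Module.End ℝ (Module.Dual ℝ V) := -(x.dualMap)

lemma s_eqn {x y z : Module.End ℝ V} (hrel : x*y - y*x = z) : T x * T y - T y * T x = T z := by
  subst hrel
  unfold T
  ext φ v
  simp only [LinearMap.sub_apply, Module.End.mul_apply, LinearMap.neg_apply,
    LinearMap.dualMap_apply, map_sub, map_neg]
  ring

lemma s_add (z w : Module.End ℝ V) : T (z + w) = T z + T w := by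
  unfold T; ext φ v; simp; ring

lemma s_neg (z : Module.End ℝ V) : T (-z) = - T z := by
  unfold T; ext φ v; simp

lemma s_zero : T (0 : Module.End ℝ V) = 0 := by
  unfold T; ext φ v; simp

lemma s_negadd (z w : Module.End ℝ V) : T (-(z + w)) = -(T z + T w) := by
  rw [s_neg, s_add]

lemma s_add3 (z : Module.End ℝ V) : T (z + z + z) = T z + T z + T z := by
  rw [s_add, s_add]

end DualTrans

open DualTrans in
lemma Rels.dual {a b c d f h e g : Module.End ℝ V} (Re : Rels a b c d f h e g) :
    Rels (T a) (T b) (T c) (T d) (T f) (T h) (T e) (T g) where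
  ab := (s_eqn Re.ab).trans (s_add _ _)
  ac := (s_eqn Re.ac).trans (s_negadd _ _)
  bc := s_eqn Re.bc
  ad := s_eqn Re.ad
  bd := (s_eqn Re.bd).trans s_zero
  cd := s_eqn Re.cd
  af := (s_eqn Re.af).trans (s_neg _)
  bf := s_eqn Re.bf
  cf := (s_eqn Re.cf).trans s_zero
  ae := s_eqn Re.ae
  be := (s_eqn Re.be).trans s_zero
  ce := s_eqn Re.ce
  ag := (s_eqn Re.ag).trans (s_neg _)
  bg := s_eqn Re.bg
  cg := (s_eqn Re.cg).trans s_zero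
  ah := (s_eqn Re.ah).trans s_zero
  bh := (s_eqn Re.bh).trans s_zero
  ch := (s_eqn Re.ch).trans s_zero
  df := (s_eqn Re.df).trans (s_neg _)
  dh := (s_eqn Re.dh).trans (s_add3 _)
  fh := (s_eqn Re.fh).trans (s_add3 _)
  de := (s_eqn Re.de).trans s_zero
  dg := (s_eqn Re.dg).trans s_zero
  fe := (s_eqn Re.fe).trans s_zero
  fg := (s_eqn Re.fg).trans s_zero
  eg := (s_eqn Re.eg).trans s_zero
  eh := (s_eqn Re.eh).trans s_zero
  gh := (s_eqn Re.gh).trans s_zero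

end Transfer

section Branch1

open Submodule

variable {V : Type*} [AddCommGroup V] [Module ℝ V]

lemma mapQ_eq_zero_imp (p : Submodule ℝ V) (x : Module.End ℝ V) (hx : p ≤ p.comap x)
    (h0 : Submodule.mapQ p p x hx = 0) : ∀ v, x v ∈ p := by
  intro v
  have := congrFun (congrArg DFunLike.coe h0) (Submodule.Quotient.mk v)
  rw [Submodule.mapQ_apply] at this
  simpa [Submodule.Quotient.mk_eq_zero] using this

lemma ap {x y z : Module.End ℝ V} (hxy : x*y - y*x = z) (v : V) : x (y v) - y (x v) = z v := by
  have := congrFun (congrArg DFunLike.coe hxy) v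
  simpa using this

variable [FiniteDimensional ℝ V]

lemma branch1 (hn5 : Module.finrank ℝ V ≤ 5) (a b c d f h e g : Module.End ℝ V)
    (Re : Rels a b c d f h e g)
    (hr : Module.finrank ℝ (V ⧸ (LinearMap.ker e ⊓ LinearMap.ker g)) ≤ 2) :
    e = 0 := by
  classical
  set K : Submodule ℝ V := LinearMap.ker e ⊓ LinearMap.ker g with hKdef
  have memK : ∀ v, v ∈ K ↔ e v = 0 ∧ g v = 0 := fun v => by
    simp [hKdef, LinearMap.mem_ker]
  -- invariance of K under the eight operators
  have geninv : ∀ (x z1 z2 : Module.End ℝ V), x*e - e*x = z1 → x*g - g*x = z2 →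
      (∀ v ∈ K, z1 v = 0) → (∀ v ∈ K, z2 v = 0) → K ≤ K.comap x := by
    intro x z1 z2 h1 h2 hz1 hz2 v hv
    obtain ⟨hev, hgv⟩ := (memK v).mp hv
    rw [Submodule.mem_comap, memK]
    constructor
    · have h3 := ap h1 v
      rw [hev, map_zero, zero_sub, hz1 v hv] at h3
      -- -(e (x v)) = 0
      exact neg_eq_zero.mp h3
    · have h3 := ap h2 v
      rw [hgv, map_zero, zero_sub, hz2 v hv] at h3
      exact neg_eq_zero.mp h3
  have onK_e : ∀ v ∈ K, e v = 0 := fun v hv => ((memK v).mp hv).1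
  have onK_g : ∀ v ∈ K, g v = 0 := fun v hv => ((memK v).mp hv).2
  have onK_0 : ∀ v ∈ K, (0 : Module.End ℝ V) v = 0 := fun v _ => rfl
  have onK_ng : ∀ v ∈ K, (-g) v = 0 := fun v hv => by
    simp [LinearMap.neg_apply, onK_g v hv]
  have hsub0 : ∀ {x y : Module.End ℝ V}, x*y - y*x = 0 → y*x - x*y = 0 := by
    intro x y hxy
    rw [sub_eq_zero] at hxy ⊢
    exact hxy.symm
  have ia : K ≤ K.comap a := geninv a e (-g) Re.ae Re.ag onK_e onK_ng
  have ib : K ≤ K.comap b := geninv b 0 e (hsub0 Re.be ▸ Re.be) Re.bg onK_0 onK_e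
  have ic : K ≤ K.comap c := geninv c g 0 Re.ce Re.cg onK_g onK_0
  have idd : K ≤ K.comap d := geninv d 0 0 Re.de Re.dg onK_0 onK_0
  have iff' : K ≤ K.comap f := geninv f 0 0 Re.fe Re.fg onK_0 onK_0
  have ihh : K ≤ K.comap h := geninv h 0 0 (hsub0 Re.eh) (hsub0 Re.gh) onK_0 onK_0
  have iee : K ≤ K.comap e := geninv e 0 0 (sub_self _) Re.eg onK_0 onK_0
  have igg : K ≤ K.comap g := geninv g 0 0 (hsub0 Re.eg) (sub_self _) onK_0 onK_0
  -- the quotient module X = V/K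
  have RelsX := Re.quot ia ib ic idd iff' ihh iee igg
  -- beta on X kills d, f, e, g
  have hdX : Submodule.mapQ K K d idd = 0 := by
    refine beta hr _ _ _ _ 1 RelsX.ab RelsX.ac RelsX.bc (Or.inl rfl) ?_
    rw [one_smul]; exact RelsX.ad
  have hfX : Submodule.mapQ K K f iff' = 0 := by
    refine beta hr _ _ _ _ (-1) RelsX.ab RelsX.ac RelsX.bc (Or.inr rfl) ?_
    exact RelsX.af.trans (neg_one_smul ℝ _).symm
  have heX : Submodule.mapQ K K e iee = 0 := by
    refine beta hr _ _ _ _ 1 RelsX.ab RelsX.ac RelsX.bc (Or.inl rfl) ?_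
    rw [one_smul]; exact RelsX.ae
  have hgX : Submodule.mapQ K K g igg = 0 := by
    refine beta hr _ _ _ _ (-1) RelsX.ab RelsX.ac RelsX.bc (Or.inr rfl) ?_
    exact RelsX.ag.trans (neg_one_smul ℝ _).symm
  have hdK : ∀ v, d v ∈ K := mapQ_eq_zero_imp K d idd hdX
  have hfK : ∀ v, f v ∈ K := mapQ_eq_zero_imp K f iff' hfX
  have heK : ∀ v, e v ∈ K := mapQ_eq_zero_imp K e iee heX
  have hgK : ∀ v, g v ∈ K := mapQ_eq_zero_imp K g igg hgX
  -- W = range e + range g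
  set W : Submodule ℝ V := LinearMap.range e ⊔ LinearMap.range g with hWdef
  have hWK : W ≤ K := by
    rw [hWdef]
    refine sup_le ?_ ?_
    · rintro v ⟨u, rfl⟩; exact heK u
    · rintro v ⟨u, rfl⟩; exact hgK u
  have hrangee : LinearMap.range e ≤ W := le_sup_left
  have hrangeg : LinearMap.range g ≤ W := le_sup_right
  -- d, f kill W
  have killW : ∀ (x : Module.End ℝ V), x*e - e*x = 0 → x*g - g*x = 0 → (∀ v, x v ∈ K) →
      ∀ v ∈ W, x v = 0 := by
    intro x h1 h2 hxK v hv
    rw [hWdef] at hv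
    obtain ⟨v1, hv1, v2, hv2, rfl⟩ := Submodule.mem_sup.mp hv
    obtain ⟨u1, rfl⟩ := hv1
    obtain ⟨u2, rfl⟩ := hv2
    have k1 : x (e u1) = e (x u1) := by
      have := ap h1 u1; simp only [LinearMap.zero_apply] at this; rw [sub_eq_zero] at this; exact this
    have k2 : x (g u2) = g (x u2) := by
      have := ap h2 u2; simp only [LinearMap.zero_apply] at this; rw [sub_eq_zero] at this; exact this
    rw [map_add, k1, k2, onK_e _ (hxK u1), onK_g _ (hxK u2), add_zero]
  have hdW : ∀ v ∈ W, d v = 0 := killW d Re.de Re.dg hdK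
  have hfW : ∀ v ∈ W, f v = 0 := killW f Re.fe Re.fg hfK
  -- invariance of W under a, b, c (and trivially under the rest)
  have wa : ∀ v ∈ W, a v ∈ W := by
    intro v hv
    rw [hWdef] at hv ⊢
    obtain ⟨v1, hv1, v2, hv2, rfl⟩ := Submodule.mem_sup.mp hv
    obtain ⟨u1, rfl⟩ := hv1
    obtain ⟨u2, rfl⟩ := hv2
    have k1 : a (e u1) = e (a u1) + e u1 := by
      have := ap Re.ae u1; rw [sub_eq_iff_eq_add] at this
      rw [this]; abel
    have k2 : a (g u2) = g (a u2) - g u2 := by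
      have := ap Re.ag u2
      rw [sub_eq_iff_eq_add] at this
      rw [this]; simp [LinearMap.neg_apply]; abel
    rw [map_add, k1, k2]
    refine Submodule.add_mem _ (Submodule.add_mem _ ?_ ?_) (Submodule.sub_mem _ ?_ ?_) <;>
      first
        | exact le_sup_left (α := Submodule ℝ V) ⟨_, rfl⟩
        | exact le_sup_right (α := Submodule ℝ V) ⟨_, rfl⟩
  have wb : ∀ v ∈ W, b v ∈ W := by
    intro v hv
    rw [hWdef] at hv ⊢
    obtain ⟨v1, hv1, v2, hv2, rfl⟩ := Submodule.mem_sup.mp hv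
    obtain ⟨u1, rfl⟩ := hv1
    obtain ⟨u2, rfl⟩ := hv2
    have k1 : b (e u1) = e (b u1) := by
      have := ap Re.be u1; simp only [LinearMap.zero_apply] at this; rw [sub_eq_zero] at this; exact this
    have k2 : b (g u2) = g (b u2) + e u2 := by
      have := ap Re.bg u2; rw [sub_eq_iff_eq_add] at this
      rw [this]; abel
    rw [map_add, k1, k2]
    refine Submodule.add_mem _ ?_ (Submodule.add_mem _ ?_ ?_) <;>
      first
        | exact le_sup_left (α := Submodule ℝ V) ⟨_, rfl⟩
        | exact le_sup_right (α := Submodule ℝ V) ⟨_, rfl⟩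
  have wc : ∀ v ∈ W, c v ∈ W := by
    intro v hv
    rw [hWdef] at hv ⊢
    obtain ⟨v1, hv1, v2, hv2, rfl⟩ := Submodule.mem_sup.mp hv
    obtain ⟨u1, rfl⟩ := hv1
    obtain ⟨u2, rfl⟩ := hv2
    have k1 : c (e u1) = e (c u1) + g u1 := by
      have := ap Re.ce u1; rw [sub_eq_iff_eq_add] at this
      rw [this]; abel
    have k2 : c (g u2) = g (c u2) := by
      have := ap Re.cg u2; simp only [LinearMap.zero_apply] at this; rw [sub_eq_zero] at this; exact this
    rw [map_add, k1, k2]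
    refine Submodule.add_mem _ (Submodule.add_mem _ ?_ ?_) ?_ <;>
      first
        | exact le_sup_left (α := Submodule ℝ V) ⟨_, rfl⟩
        | exact le_sup_right (α := Submodule ℝ V) ⟨_, rfl⟩
  -- main case distinction
  by_cases he0 : e = 0
  · exact he0
  -- dims ≥ 1
  have hW1 : 1 ≤ Module.finrank ℝ W := by
    by_contra hcon
    push_neg at hcon
    interval_cases hfr : Module.finrank ℝ W
    have : W = ⊥ := Submodule.finrank_eq_zero.mp hfr
    apply he0
    ext v
    have : e v ∈ (⊥ : Submodule ℝ V) := this ▸ hrangee ⟨v, rfl⟩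
    simpa using this
  have hX1 : 1 ≤ Module.finrank ℝ (V ⧸ K) := by
    by_contra hcon
    push_neg at hcon
    interval_cases hfr : Module.finrank ℝ (V ⧸ K)
    have hsing : Subsingleton (V ⧸ K) := Module.finrank_zero_iff.mp hfr
    apply he0
    ext v
    have : (Submodule.Quotient.mk v : V ⧸ K) = 0 := Subsingleton.elim _ _
    have hvK : v ∈ K := (Submodule.Quotient.mk_eq_zero K).mp this
    simpa using onK_e v hvK
  by_cases hspec : Module.finrank ℝ (V ⧸ K) = 1 ∧ Module.finrank ℝ W = 1
  · -- special (1,1) case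
    obtain ⟨hX1', hW1'⟩ := hspec
    -- a maps V into K
    have haX : Submodule.mapQ K K a ia = 0 := by
      rw [← RelsX.bc, comm1 (by omega) (Submodule.mapQ K K b ib) (Submodule.mapQ K K c ic),
        sub_self]
    have haK : ∀ v, a v ∈ K := mapQ_eq_zero_imp K a ia haX
    -- a kills W
    have haW : ∀ v ∈ W, a v = 0 := by
      have hcomm := comm1 (V := ↥W) (by omega) (b.restrict wb) (c.restrict wc)
      intro v hv
      have h1 := ap Re.bc v
      have h2 := congrFun (congrArg DFunLike.coe hcomm) ⟨v, hv⟩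
      simp only [Module.End.mul_apply] at h2
      have h3 : b (c v) = c (b v) := by
        have := congrArg (Subtype.val) h2
        simpa [LinearMap.restrict_coe_apply] using this
      rw [← h1, h3, sub_self]
  -- conclude e = 0
    ext v
    have h1 := ap Re.ae v
    rw [onK_e _ (haK v) , haW _ (hrangee ⟨v, rfl⟩), sub_zero] at h1
    simpa using h1.symm
  · -- general case: middle quotient Y = K/W has dim ≤ 2
    push_neg at hspec
    -- restricted operators on K
    have ra : ∀ v ∈ K, a v ∈ K := fun v hv => Submodule.mem_comap.mp (ia hv)
    have rb : ∀ v ∈ K, b v ∈ K := fun v hv => Submodule.mem_comap.mp (ib hv)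
    have rc : ∀ v ∈ K, c v ∈ K := fun v hv => Submodule.mem_comap.mp (ic hv)
    have rd : ∀ v ∈ K, d v ∈ K := fun v hv => Submodule.mem_comap.mp (idd hv)
    have rf : ∀ v ∈ K, f v ∈ K := fun v hv => Submodule.mem_comap.mp (iff' hv)
    have rh : ∀ v ∈ K, h v ∈ K := fun v hv => Submodule.mem_comap.mp (ihh hv)
    have re' : ∀ v ∈ K, e v ∈ K := fun v hv => Submodule.mem_comap.mp (iee hv)
    have rg : ∀ v ∈ K, g v ∈ K := fun v hv => Submodule.mem_comap.mp (igg hv)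
    have RelsK := Re.restrict ra rb rc rd rf rh re' rg
    -- W as a submodule of K
    set W' : Submodule ℝ ↥K := W.comap K.subtype with hW'def
    have memW' : ∀ u : ↥K, u ∈ W' ↔ (u : V) ∈ W := fun u => by
      rw [hW'def, Submodule.mem_comap]; rfl
    -- invariance of W' under restricted operators
    have mkinv : ∀ (x : Module.End ℝ V) (rx : ∀ v ∈ K, x v ∈ K), (∀ v ∈ W, x v ∈ W) →
        W' ≤ W'.comap (x.restrict rx) := by
      intro x rx hxW u hu
      rw [Submodule.mem_comap, memW', LinearMap.restrict_coe_apply]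
      exact hxW _ ((memW' u).mp hu)
    have trivW : ∀ (x : Module.End ℝ V), (∀ v ∈ W, x v = 0) → (∀ v ∈ W, x v ∈ W) := by
      intro x hx v hv
      rw [hx v hv]; exact W.zero_mem
    have we' : ∀ v ∈ W, e v ∈ W := trivW e (fun v hv => onK_e v (hWK hv))
    have wg : ∀ v ∈ W, g v ∈ W := trivW g (fun v hv => onK_g v (hWK hv))
    have wd : ∀ v ∈ W, d v ∈ W := trivW d hdW
    have wf : ∀ v ∈ W, f v ∈ W := trivW f hfW
    have wh : ∀ v ∈ W, h v ∈ W := by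
      intro v hv
      rw [hWdef] at hv ⊢
      obtain ⟨v1, hv1, v2, hv2, rfl⟩ := Submodule.mem_sup.mp hv
      obtain ⟨u1, rfl⟩ := hv1
      obtain ⟨u2, rfl⟩ := hv2
      have k1 : h (e u1) = e (h u1) := by
        have := ap Re.eh u1; simp only [LinearMap.zero_apply] at this; rw [sub_eq_zero] at this; exact this.symm
      have k2 : h (g u2) = g (h u2) := by
        have := ap Re.gh u2; simp only [LinearMap.zero_apply] at this; rw [sub_eq_zero] at this; exact this.symm
      rw [map_add, k1, k2]
      exact Submodule.add_mem _ (le_sup_left (α := Submodule ℝ V) ⟨_, rfl⟩)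
        (le_sup_right (α := Submodule ℝ V) ⟨_, rfl⟩)
    have RelsY := RelsK.quot (mkinv a ra wa) (mkinv b rb wb) (mkinv c rc wc)
      (mkinv d rd wd) (mkinv f rf wf) (mkinv h rh wh) (mkinv e re' we') (mkinv g rg wg)
    -- dimension of Y
    have hdimY : Module.finrank ℝ (↥K ⧸ W') ≤ 2 := by
      have e1 : Module.finrank ℝ (V ⧸ K) + Module.finrank ℝ K = Module.finrank ℝ V :=
        Submodule.finrank_quotient_add_finrank K
      have e2 : Module.finrank ℝ (↥K ⧸ W') + Module.finrank ℝ W' = Module.finrank ℝ K :=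
        Submodule.finrank_quotient_add_finrank W'
      have e3 : Module.finrank ℝ W' = Module.finrank ℝ W :=
        LinearEquiv.finrank_eq (Submodule.comapSubtypeEquivOfLe hWK)
      have hr2 : Module.finrank ℝ (V ⧸ K) ≤ 2 := hr
      have hrw : Module.finrank ℝ (V ⧸ K) = 1 → Module.finrank ℝ W ≠ 1 := hspec
      omega
    -- beta on Y kills d and f
    have hdY : Submodule.mapQ W' W' (d.restrict rd) (mkinv d rd wd) = 0 := by
      refine beta hdimY _ _ _ _ 1 RelsY.ab RelsY.ac RelsY.bc (Or.inl rfl) ?_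
      rw [one_smul]; exact RelsY.ad
    have hfY : Submodule.mapQ W' W' (f.restrict rf) (mkinv f rf wf) = 0 := by
      refine beta hdimY _ _ _ _ (-1) RelsY.ab RelsY.ac RelsY.bc (Or.inr rfl) ?_
      exact RelsY.af.trans (neg_one_smul ℝ _).symm
    have hdKW : ∀ v ∈ K, d v ∈ W := by
      intro v hv
      have := mapQ_eq_zero_imp W' (d.restrict rd) (mkinv d rd wd) hdY ⟨v, hv⟩
      rw [memW', LinearMap.restrict_coe_apply] at this
      exact this
    have hfKW : ∀ v ∈ K, f v ∈ W := by
      intro v hv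
      have := mapQ_eq_zero_imp W' (f.restrict rf) (mkinv f rf wf) hfY ⟨v, hv⟩
      rw [memW', LinearMap.restrict_coe_apply] at this
      exact this
    -- the endgame: 3e = 2dfd - ddf - fdd kills everything
    have hh_eq : h = f*d - d*f := by
      have := congrArg Neg.neg Re.df
      rw [neg_sub, neg_neg] at this
      exact this.symm
    have big : d*(f*d - d*f) - (f*d - d*f)*d = e + e + e := by
      rw [← hh_eq]; exact Re.dh
    ext v
    have hbig := congrFun (congrArg DFunLike.coe big) v
    simp only [LinearMap.sub_apply, LinearMap.add_apply, Module.End.mul_apply,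
      LinearMap.zero_apply, map_sub] at hbig ⊢
    have t1 : d (f (d v)) = 0 := hdW _ (hfKW _ (hdK v))
    have t2 : d (d (f v)) = 0 := hdW _ (hdKW _ (hfK v))
    have t3 : f (d (d v)) = 0 := hfW _ (hdKW _ (hdK v))
    rw [t1, t2, t3] at hbig
    have h3 : e v + e v + e v = 0 := by rw [← hbig]; abel
    have h4 : (3 : ℝ) • (e v) = 0 := by
      rw [show (3:ℝ) • (e v) = e v + e v + e v by module]
      exact h3
    have := smul_eq_zero.mp h4
    simpa using this

end Branch1

section MainLemma

open Module Submodule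

/-- In any real representation of dimension at most 5, the element `e` of `L_{8.15}` acts as zero. -/
lemma main815 : ∀ (n : ℕ) (V : Type) (_ : AddCommGroup V),
    ∀ (_ : Module ℝ V) (_ : FiniteDimensional ℝ V),
    Module.finrank ℝ V = n → n ≤ 5 → ∀ a b c d f h e g : Module.End ℝ V,
    Rels a b c d f h e g → e = 0 := by
  intro n
  induction n using Nat.strong_induction_on with
  | _ n IH =>
  intro V _ _ _ hfr hn5 a b c d f h e g Re
  by_cases hr : Module.finrank ℝ (V ⧸ (LinearMap.ker e ⊓ LinearMap.ker g)) ≤ 2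
  · exact branch1 (hfr ▸ hn5) a b c d f h e g Re hr
  -- dual representation
  have ReD := Re.dual
  have hfrD : Module.finrank ℝ (Module.Dual ℝ V) = n := by
    rw [Subspace.dual_finrank_eq, hfr]
  by_cases hrD : Module.finrank ℝ (Module.Dual ℝ V ⧸
      (LinearMap.ker (DualTrans.T e) ⊓ LinearMap.ker (DualTrans.T g))) ≤ 2
  · have heD : DualTrans.T e = 0 :=
      branch1 (hfrD ▸ hn5) _ _ _ _ _ _ _ _ ReD hrD
    ext v
    rw [LinearMap.zero_apply]
    rw [← Module.forall_dual_apply_eq_zero_iff (R := ℝ)]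
    intro φ
    have h0 := congrFun (congrArg DFunLike.coe heD) φ
    rw [LinearMap.zero_apply] at h0
    have : e.dualMap φ = 0 := by
      have : -(e.dualMap) φ = 0 := h0
      simpa [neg_eq_zero] using this
    have := congrFun (congrArg DFunLike.coe this) v
    simpa using this
  · -- both quotients have dimension ≥ 3
    exfalso
    push_neg at hr hrD
    set K : Submodule ℝ V := LinearMap.ker e ⊓ LinearMap.ker g with hKdef
    set W : Submodule ℝ V := LinearMap.range e ⊔ LinearMap.range g with hWdef
    have hrangee : LinearMap.range e ≤ W := le_sup_left
    have hrangeg : LinearMap.range g ≤ W := le_sup_right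
    set w : ℕ := Module.finrank ℝ W with hwdef
    -- n ≥ 3
    have hn3 : 3 ≤ n := by
      have := Submodule.finrank_quotient_add_finrank K
      have h2 : Module.finrank ℝ (V ⧸ K) + Module.finrank ℝ K = n := by rw [this, hfr]
      omega
    -- Step 1 : w ≥ 3 via the annihilator bound
    have hannih : W.dualAnnihilator ≤
        LinearMap.ker (DualTrans.T e) ⊓ LinearMap.ker (DualTrans.T g) := by
      intro φ hφ
      rw [Submodule.mem_dualAnnihilator] at hφ
      refine Submodule.mem_inf.mpr ⟨?_, ?_⟩
      · rw [LinearMap.mem_ker]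
        show -(e.dualMap) φ = 0
        rw [neg_eq_zero]
        ext v
        exact hφ _ (hrangee ⟨v, rfl⟩)
      · rw [LinearMap.mem_ker]
        show -(g.dualMap) φ = 0
        rw [neg_eq_zero]
        ext v
        exact hφ _ (hrangeg ⟨v, rfl⟩)
    have hannihrank : Module.finrank ℝ W.dualAnnihilator = n - w := by
      have e1 : Module.finrank ℝ W.dualAnnihilator
          = Module.finrank ℝ (Module.Dual ℝ (V ⧸ W)) :=
        (LinearEquiv.finrank_eq (Submodule.dualQuotEquivDualAnnihilator W)).symm
      rw [e1, Subspace.dual_finrank_eq]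
      have := Submodule.finrank_quotient_add_finrank W
      have h2 : Module.finrank ℝ (V ⧸ W) + w = n := by rw [this, hfr]
      omega
    have hw3 : 3 ≤ w := by
      have hq := Submodule.finrank_quotient_add_finrank
        (LinearMap.ker (DualTrans.T e) ⊓ LinearMap.ker (DualTrans.T g))
      rw [hfrD] at hq
      have hmono := Submodule.finrank_mono hannih
      rw [hannihrank] at hmono
      have hwn : w ≤ n := by
        have := Submodule.finrank_le W
        rw [hfr] at this
        exact this
      omega
    -- Step 2 : w ≤ n - 1 via a common kernel vector in the dual
    have henil : IsNilpotent e := nilpotent_of_weight a e Re.ae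
    have hgnil : IsNilpotent g := by
      exact nilpotent_of_weight (-a) g (negweight a g Re.ag)
    have heDnil : IsNilpotent (DualTrans.T e) := nilpotent_of_weight (DualTrans.T a) _ ReD.ae
    have hgDnil : IsNilpotent (DualTrans.T g) := by
      exact nilpotent_of_weight (-(DualTrans.T a)) _ (negweight _ _ ReD.ag)
    have hDnontriv : ∃ φ : Module.Dual ℝ V, φ ≠ 0 := by
      have : 0 < Module.finrank ℝ (Module.Dual ℝ V) := by omega
      have : Nontrivial (Module.Dual ℝ V) := Module.finrank_pos_iff.mp this
      exact exists_ne 0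
    obtain ⟨φ0, hφ0⟩ := hDnontriv
    have hcommD : (DualTrans.T e) * (DualTrans.T g) = (DualTrans.T g) * (DualTrans.T e) := by
      have := ReD.eg
      rwa [sub_eq_zero] at this
    obtain ⟨φ, hφne, hφe, hφg⟩ := common_ker _ _ hcommD heDnil hgDnil hφ0
    have hWker : W ≤ LinearMap.ker φ := by
      rw [hWdef]
      refine sup_le ?_ ?_
      · rintro v ⟨u, rfl⟩
        rw [LinearMap.mem_ker]
        have : -(e.dualMap) φ = 0 := hφe
        rw [neg_eq_zero] at this
        have := congrFun (congrArg DFunLike.coe this) u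
        simpa using this
      · rintro v ⟨u, rfl⟩
        rw [LinearMap.mem_ker]
        have : -(g.dualMap) φ = 0 := hφg
        rw [neg_eq_zero] at this
        have := congrFun (congrArg DFunLike.coe this) u
        simpa using this
    have hwn1 : w ≤ n - 1 := by
      have h1 : Module.finrank ℝ (LinearMap.range φ) + Module.finrank ℝ (LinearMap.ker φ)
          = n := by rw [LinearMap.finrank_range_add_finrank_ker, hfr]
      have h2 : 1 ≤ Module.finrank ℝ (LinearMap.range φ) := by
        by_contra hcon
        push_neg at hcon
        interval_cases hfr2 : Module.finrank ℝ (LinearMap.range φ)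
        have : LinearMap.range φ = ⊥ := Submodule.finrank_eq_zero.mp hfr2
        exact hφne (LinearMap.range_eq_bot.mp this)
      have h3 := Submodule.finrank_mono hWker
      omega
    -- Step 3 : restrict to W and use the induction hypothesis
    have winv : ∀ (x z1 z2 : Module.End ℝ V), x*e - e*x = z1 → x*g - g*x = z2 →
        (∀ u, z1 u ∈ W) → (∀ u, z2 u ∈ W) → ∀ v ∈ W, x v ∈ W := by
      intro x z1 z2 h1 h2 hz1 hz2 v hv
      rw [hWdef] at hv
      obtain ⟨v1, hv1, v2, hv2, rfl⟩ := Submodule.mem_sup.mp hv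
      obtain ⟨u1, rfl⟩ := hv1
      obtain ⟨u2, rfl⟩ := hv2
      have k1 : x (e u1) = e (x u1) + z1 u1 := by
        have := ap h1 u1
        rw [sub_eq_iff_eq_add] at this
        rw [this]; abel
      have k2 : x (g u2) = g (x u2) + z2 u2 := by
        have := ap h2 u2
        rw [sub_eq_iff_eq_add] at this
        rw [this]; abel
      rw [map_add, k1, k2]
      refine Submodule.add_mem _ (Submodule.add_mem _ ?_ (hz1 u1))
        (Submodule.add_mem _ ?_ (hz2 u2))
      · exact hrangee ⟨_, rfl⟩
      · exact hrangeg ⟨_, rfl⟩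
    have hsub0 : ∀ {x y : Module.End ℝ V}, x * y - y * x = 0 → y * x - x * y = 0 := by
      intro x y hxy
      rw [sub_eq_zero] at hxy ⊢
      exact hxy.symm
    have meme : ∀ u, e u ∈ W := fun u => hrangee ⟨u, rfl⟩
    have memg : ∀ u, g u ∈ W := fun u => hrangeg ⟨u, rfl⟩
    have memng : ∀ u, (-g) u ∈ W := fun u => by
      rw [LinearMap.neg_apply]; exact W.neg_mem (memg u)
    have mem0 : ∀ u, (0 : Module.End ℝ V) u ∈ W := fun u => by
      rw [LinearMap.zero_apply]; exact W.zero_mem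
    have wa : ∀ v ∈ W, a v ∈ W := winv a e (-g) Re.ae Re.ag meme memng
    have wb : ∀ v ∈ W, b v ∈ W := winv b 0 e (hsub0 Re.be ▸ Re.be) Re.bg mem0 meme
    have wc : ∀ v ∈ W, c v ∈ W := winv c g 0 Re.ce Re.cg memg mem0
    have wd : ∀ v ∈ W, d v ∈ W := winv d 0 0 Re.de Re.dg mem0 mem0
    have wf : ∀ v ∈ W, f v ∈ W := winv f 0 0 Re.fe Re.fg mem0 mem0
    have wh : ∀ v ∈ W, h v ∈ W := winv h 0 0 (hsub0 Re.eh) (hsub0 Re.gh) mem0 mem0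
    have we : ∀ v ∈ W, e v ∈ W := winv e 0 0 (sub_self _) Re.eg mem0 mem0
    have wg : ∀ v ∈ W, g v ∈ W := winv g 0 0 (hsub0 Re.eg) (sub_self _) mem0 mem0
    have RelsW := Re.restrict wa wb wc wd wf wh we wg
    have heW : e.restrict we = 0 := by
      refine IH w ?_ ↥W inferInstance inferInstance inferInstance rfl ?_ _ _ _ _ _ _ _ _ RelsW
      · omega
      · omega
    have hgW : g.restrict wg = 0 := by
      have h2 := RelsW.ce
      rw [heW, mul_zero, zero_mul, sub_zero] at h2
      simpa using h2.symm
    have hWK : W ≤ K := by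
      intro v hv
      rw [hKdef, Submodule.mem_inf, LinearMap.mem_ker, LinearMap.mem_ker]
      constructor
      · have h2 := congrFun (congrArg DFunLike.coe heW) ⟨v, hv⟩
        have h3 := congrArg Subtype.val h2
        simpa [LinearMap.restrict_coe_apply] using h3
      · have h2 := congrFun (congrArg DFunLike.coe hgW) ⟨v, hv⟩
        have h3 := congrArg Subtype.val h2
        simpa [LinearMap.restrict_coe_apply] using h3
    have hfin : w ≤ Module.finrank ℝ K := Submodule.finrank_mono hWK
    have hq2 : Module.finrank ℝ (V ⧸ K) + Module.finrank ℝ K = n := by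
      rw [Submodule.finrank_quotient_add_finrank, hfr]
    omega

end MainLemma

section Construction

lemma Mg_add (a1 b1 c1 d1 e1 f1 g1 h1 a2 b2 c2 d2 e2 f2 g2 h2 : ℝ) :
    Mg a1 b1 c1 d1 e1 f1 g1 h1 + Mg a2 b2 c2 d2 e2 f2 g2 h2
      = Mg (a1+a2) (b1+b2) (c1+c2) (d1+d2) (e1+e2) (f1+f2) (g1+g2) (h1+h2) := by
  ext i j
  rw [Matrix.add_apply]
  rcases six i with rfl|rfl|rfl|rfl|rfl|rfl <;> rcases six j with rfl|rfl|rfl|rfl|rfl|rfl <;>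
    simp only [Mg_00, Mg_01, Mg_02, Mg_03, Mg_04, Mg_05, Mg_10, Mg_11, Mg_12, Mg_13, Mg_14, Mg_15, Mg_20, Mg_21, Mg_22, Mg_23, Mg_24, Mg_25, Mg_30, Mg_31, Mg_32, Mg_33, Mg_34, Mg_35, Mg_40, Mg_41, Mg_42, Mg_43, Mg_44, Mg_45, Mg_50, Mg_51, Mg_52, Mg_53, Mg_54, Mg_55] <;> ring

lemma Mg_smul (r a1 b1 c1 d1 e1 f1 g1 h1 : ℝ) :
    r • Mg a1 b1 c1 d1 e1 f1 g1 h1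
      = Mg (r*a1) (r*b1) (r*c1) (r*d1) (r*e1) (r*f1) (r*g1) (r*h1) := by
  ext i j
  rw [Matrix.smul_apply]
  rcases six i with rfl|rfl|rfl|rfl|rfl|rfl <;> rcases six j with rfl|rfl|rfl|rfl|rfl|rfl <;>
    simp only [Mg_00, Mg_01, Mg_02, Mg_03, Mg_04, Mg_05, Mg_10, Mg_11, Mg_12, Mg_13, Mg_14, Mg_15, Mg_20, Mg_21, Mg_22, Mg_23, Mg_24, Mg_25, Mg_30, Mg_31, Mg_32, Mg_33, Mg_34, Mg_35, Mg_40, Mg_41, Mg_42, Mg_43, Mg_44, Mg_45, Mg_50, Mg_51, Mg_52, Mg_53, Mg_54, Mg_55, smul_eq_mul] <;> ring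

lemma Mg_neg (a1 b1 c1 d1 e1 f1 g1 h1 : ℝ) :
    - Mg a1 b1 c1 d1 e1 f1 g1 h1
      = Mg (-a1) (-b1) (-c1) (-d1) (-e1) (-f1) (-g1) (-h1) := by
  ext i j
  rw [Matrix.neg_apply]
  rcases six i with rfl|rfl|rfl|rfl|rfl|rfl <;> rcases six j with rfl|rfl|rfl|rfl|rfl|rfl <;>
    simp only [Mg_00, Mg_01, Mg_02, Mg_03, Mg_04, Mg_05, Mg_10, Mg_11, Mg_12, Mg_13, Mg_14, Mg_15, Mg_20, Mg_21, Mg_22, Mg_23, Mg_24, Mg_25, Mg_30, Mg_31, Mg_32, Mg_33, Mg_34, Mg_35, Mg_40, Mg_41, Mg_42, Mg_43, Mg_44, Mg_45, Mg_50, Mg_51, Mg_52, Mg_53, Mg_54, Mg_55] <;> ring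

lemma Mg_zero : Mg 0 0 0 0 0 0 0 0 = 0 := by
  ext i j
  rw [Matrix.zero_apply]
  rcases six i with rfl|rfl|rfl|rfl|rfl|rfl <;> rcases six j with rfl|rfl|rfl|rfl|rfl|rfl <;>
    simp only [Mg_00, Mg_01, Mg_02, Mg_03, Mg_04, Mg_05, Mg_10, Mg_11, Mg_12, Mg_13, Mg_14, Mg_15, Mg_20, Mg_21, Mg_22, Mg_23, Mg_24, Mg_25, Mg_30, Mg_31, Mg_32, Mg_33, Mg_34, Mg_35, Mg_40, Mg_41, Mg_42, Mg_43, Mg_44, Mg_45, Mg_50, Mg_51, Mg_52, Mg_53, Mg_54, Mg_55] <;> ring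

/-- Turkowski's algebra `L_{8.15}` as a Lie subalgebra of `gl(6,ℝ)`. -/
noncomputable def L815 : LieSubalgebra ℝ (Matrix (Fin 6) (Fin 6) ℝ) where
  carrier := {M | ∃ a b c d e f g h : ℝ, M = Mg a b c d e f g h}
  add_mem' := by
    rintro x y ⟨a1, b1, c1, d1, e1, f1, g1, h1, rfl⟩ ⟨a2, b2, c2, d2, e2, f2, g2, h2, rfl⟩
    exact ⟨a1+a2, b1+b2, c1+c2, d1+d2, e1+e2, f1+f2, g1+g2, h1+h2, Mg_add ..⟩
  zero_mem' := ⟨0, 0, 0, 0, 0, 0, 0, 0, Mg_zero.symm⟩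
  smul_mem' := by
    rintro r x ⟨a1, b1, c1, d1, e1, f1, g1, h1, rfl⟩
    exact ⟨r*a1, r*b1, r*c1, r*d1, r*e1, r*f1, r*g1, r*h1, Mg_smul ..⟩
  lie_mem' := by
    rintro x y ⟨a1, b1, c1, d1, e1, f1, g1, h1, rfl⟩ ⟨a2, b2, c2, d2, e2, f2, g2, h2, rfl⟩
    rw [Ring.lie_def]
    exact ⟨_, _, _, _, _, _, _, _, Mg_bracket ..⟩

noncomputable def Φ815 : (Fin 8 → ℝ) →ₗ[ℝ] Matrix (Fin 6) (Fin 6) ℝ where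
  toFun := fun x => Mg (x 0) (x 1) (x 2) (x 3) (x 4) (x 5) (x 6) (x 7)
  map_add' := by
    intro x y
    simp only [Pi.add_apply]
    rw [Mg_add]
  map_smul' := by
    intro r x
    simp only [Pi.smul_apply, smul_eq_mul, RingHom.id_apply]
    rw [Mg_smul]

lemma Φ815_ker : LinearMap.ker Φ815 = ⊥ := by
  rw [LinearMap.ker_eq_bot']
  intro x hx
  have hx' : Mg (x 0) (x 1) (x 2) (x 3) (x 4) (x 5) (x 6) (x 7) = 0 := hx
  funext i
  have key : ∀ (i0 j0 : Fin 6), Mg (x 0) (x 1) (x 2) (x 3) (x 4) (x 5) (x 6) (x 7) i0 j0 = 0 :=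
    fun i0 j0 => by rw [hx']; rfl
  rcases (by omega : i = 0 ∨ i = 1 ∨ i = 2 ∨ i = 3 ∨ i = 4 ∨ i = 5 ∨ i = 6 ∨ i = 7) with
    rfl|rfl|rfl|rfl|rfl|rfl|rfl|rfl
  · simpa [Mg] using key 0 0
  · simpa [Mg] using key 0 1
  · simpa [Mg] using key 1 0
  · simpa [Mg] using key 0 4
  · simpa [Mg] using key 0 5
  · simpa [Mg] using key 1 4
  · simpa [Mg] using key 1 5
  · have := key 0 2
    rw [Mg_02] at this
    simpa using this

lemma Φ815_range : LinearMap.range Φ815 = L815.toSubmodule := by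
  ext M
  constructor
  · rintro ⟨x, rfl⟩
    exact ⟨x 0, x 1, x 2, x 3, x 4, x 5, x 6, x 7, rfl⟩
  · rintro ⟨a, b, c, d, e, f, g, h, rfl⟩
    exact ⟨![a, b, c, d, e, f, g, h], rfl⟩

lemma L815_finrank : Module.finrank ℝ ↥L815 = 8 := by
  have h1 := Φ815.finrank_range_add_finrank_ker
  rw [Φ815_ker, finrank_bot] at h1
  have h2 : Module.finrank ℝ (Fin 8 → ℝ) = 8 := Module.finrank_fin_fun ℝ
  have h3 : Module.finrank ℝ ↥(LinearMap.range Φ815) = 8 := by omega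
  have h4 : Module.finrank ℝ ↥(LinearMap.range Φ815) = Module.finrank ℝ ↥L815.toSubmodule :=
    LinearEquiv.finrank_eq (LinearEquiv.ofEq _ _ Φ815_range)
  rw [h4] at h3
  exact h3

end Construction

section Application

open Module

/-- A ring equivalence transports `Rels`. -/
lemma Rels.ringMap {R S : Type*} [Ring R] [Ring S] (π : R ≃+* S) {a b c d f h e g : R}
    (Re : Rels a b c d f h e g) :
    Rels (π a) (π b) (π c) (π d) (π f) (π h) (π e) (π g) where
  ab := by rw [← map_mul, ← map_mul, ← map_sub, Re.ab, map_add]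
  ac := by rw [← map_mul, ← map_mul, ← map_sub, Re.ac, map_neg, map_add]
  bc := by rw [← map_mul, ← map_mul, ← map_sub, Re.bc]
  ad := by rw [← map_mul, ← map_mul, ← map_sub, Re.ad]
  bd := by rw [← map_mul, ← map_mul, ← map_sub, Re.bd, map_zero]
  cd := by rw [← map_mul, ← map_mul, ← map_sub, Re.cd]
  af := by rw [← map_mul, ← map_mul, ← map_sub, Re.af, map_neg]
  bf := by rw [← map_mul, ← map_mul, ← map_sub, Re.bf]
  cf := by rw [← map_mul, ← map_mul, ← map_sub, Re.cf, map_zero]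
  ae := by rw [← map_mul, ← map_mul, ← map_sub, Re.ae]
  be := by rw [← map_mul, ← map_mul, ← map_sub, Re.be, map_zero]
  ce := by rw [← map_mul, ← map_mul, ← map_sub, Re.ce]
  ag := by rw [← map_mul, ← map_mul, ← map_sub, Re.ag, map_neg]
  bg := by rw [← map_mul, ← map_mul, ← map_sub, Re.bg]
  cg := by rw [← map_mul, ← map_mul, ← map_sub, Re.cg, map_zero]
  ah := by rw [← map_mul, ← map_mul, ← map_sub, Re.ah, map_zero]
  bh := by rw [← map_mul, ← map_mul, ← map_sub, Re.bh, map_zero]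
  ch := by rw [← map_mul, ← map_mul, ← map_sub, Re.ch, map_zero]
  df := by rw [← map_mul, ← map_mul, ← map_sub, Re.df, map_neg]
  dh := by rw [← map_mul, ← map_mul, ← map_sub, Re.dh, map_add, map_add]
  fh := by rw [← map_mul, ← map_mul, ← map_sub, Re.fh, map_add, map_add]
  de := by rw [← map_mul, ← map_mul, ← map_sub, Re.de, map_zero]
  dg := by rw [← map_mul, ← map_mul, ← map_sub, Re.dg, map_zero]
  fe := by rw [← map_mul, ← map_mul, ← map_sub, Re.fe, map_zero]
  fg := by rw [← map_mul, ← map_mul, ← map_sub, Re.fg, map_zero]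
  eg := by rw [← map_mul, ← map_mul, ← map_sub, Re.eg, map_zero]
  eh := by rw [← map_mul, ← map_mul, ← map_sub, Re.eh, map_zero]
  gh := by rw [← map_mul, ← map_mul, ← map_sub, Re.gh, map_zero]

noncomputable abbrev EA : ↥L815 := ⟨Mg 1 0 0 0 0 0 0 0, ⟨1, 0, 0, 0, 0, 0, 0, 0, rfl⟩⟩
noncomputable abbrev EB : ↥L815 := ⟨Mg 0 1 0 0 0 0 0 0, ⟨0, 1, 0, 0, 0, 0, 0, 0, rfl⟩⟩
noncomputable abbrev EC : ↥L815 := ⟨Mg 0 0 1 0 0 0 0 0, ⟨0, 0, 1, 0, 0, 0, 0, 0, rfl⟩⟩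
noncomputable abbrev ED : ↥L815 := ⟨Mg 0 0 0 1 0 0 0 0, ⟨0, 0, 0, 1, 0, 0, 0, 0, rfl⟩⟩
noncomputable abbrev EE : ↥L815 := ⟨Mg 0 0 0 0 1 0 0 0, ⟨0, 0, 0, 0, 1, 0, 0, 0, rfl⟩⟩
noncomputable abbrev EF : ↥L815 := ⟨Mg 0 0 0 0 0 1 0 0, ⟨0, 0, 0, 0, 0, 1, 0, 0, rfl⟩⟩
noncomputable abbrev EG : ↥L815 := ⟨Mg 0 0 0 0 0 0 1 0, ⟨0, 0, 0, 0, 0, 0, 1, 0, rfl⟩⟩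
noncomputable abbrev EH : ↥L815 := ⟨Mg 0 0 0 0 0 0 0 1, ⟨0, 0, 0, 0, 0, 0, 0, 1, rfl⟩⟩

lemma rel_ab : ⁅EA, EB⁆ = EB + EB := by
  apply Subtype.ext
  show ⁅(Mg 1 0 0 0 0 0 0 0 : Matrix (Fin 6) (Fin 6) ℝ), Mg 0 1 0 0 0 0 0 0⁆ = Mg 0 1 0 0 0 0 0 0 + Mg 0 1 0 0 0 0 0 0
  rw [Ring.lie_def, Mg_bracket, Mg_add]
  congr 1 <;> norm_num
lemma rel_ac : ⁅EA, EC⁆ = -(EC + EC) := by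
  apply Subtype.ext
  show ⁅(Mg 1 0 0 0 0 0 0 0 : Matrix (Fin 6) (Fin 6) ℝ), Mg 0 0 1 0 0 0 0 0⁆ = -(Mg 0 0 1 0 0 0 0 0 + Mg 0 0 1 0 0 0 0 0)
  rw [Ring.lie_def, Mg_bracket, Mg_add, Mg_neg]
  congr 1 <;> norm_num
lemma rel_bc : ⁅EB, EC⁆ = EA := by
  apply Subtype.ext
  show ⁅(Mg 0 1 0 0 0 0 0 0 : Matrix (Fin 6) (Fin 6) ℝ), Mg 0 0 1 0 0 0 0 0⁆ = Mg 1 0 0 0 0 0 0 0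
  rw [Ring.lie_def, Mg_bracket]
  congr 1 <;> norm_num
lemma rel_ad : ⁅EA, ED⁆ = ED := by
  apply Subtype.ext
  show ⁅(Mg 1 0 0 0 0 0 0 0 : Matrix (Fin 6) (Fin 6) ℝ), Mg 0 0 0 1 0 0 0 0⁆ = Mg 0 0 0 1 0 0 0 0
  rw [Ring.lie_def, Mg_bracket]
  congr 1 <;> norm_num
lemma rel_bd : ⁅EB, ED⁆ = 0 := by
  apply Subtype.ext
  show ⁅(Mg 0 1 0 0 0 0 0 0 : Matrix (Fin 6) (Fin 6) ℝ), Mg 0 0 0 1 0 0 0 0⁆ = 0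
  rw [Ring.lie_def, Mg_bracket, ← Mg_zero]
  congr 1 <;> norm_num
lemma rel_cd : ⁅EC, ED⁆ = EF := by
  apply Subtype.ext
  show ⁅(Mg 0 0 1 0 0 0 0 0 : Matrix (Fin 6) (Fin 6) ℝ), Mg 0 0 0 1 0 0 0 0⁆ = Mg 0 0 0 0 0 1 0 0
  rw [Ring.lie_def, Mg_bracket]
  congr 1 <;> norm_num
lemma rel_af : ⁅EA, EF⁆ = -EF := by
  apply Subtype.ext
  show ⁅(Mg 1 0 0 0 0 0 0 0 : Matrix (Fin 6) (Fin 6) ℝ), Mg 0 0 0 0 0 1 0 0⁆ = -(Mg 0 0 0 0 0 1 0 0)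
  rw [Ring.lie_def, Mg_bracket, Mg_neg]
  congr 1 <;> norm_num
lemma rel_bf : ⁅EB, EF⁆ = ED := by
  apply Subtype.ext
  show ⁅(Mg 0 1 0 0 0 0 0 0 : Matrix (Fin 6) (Fin 6) ℝ), Mg 0 0 0 0 0 1 0 0⁆ = Mg 0 0 0 1 0 0 0 0
  rw [Ring.lie_def, Mg_bracket]
  congr 1 <;> norm_num
lemma rel_cf : ⁅EC, EF⁆ = 0 := by
  apply Subtype.ext
  show ⁅(Mg 0 0 1 0 0 0 0 0 : Matrix (Fin 6) (Fin 6) ℝ), Mg 0 0 0 0 0 1 0 0⁆ = 0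
  rw [Ring.lie_def, Mg_bracket, ← Mg_zero]
  congr 1 <;> norm_num
lemma rel_ae : ⁅EA, EE⁆ = EE := by
  apply Subtype.ext
  show ⁅(Mg 1 0 0 0 0 0 0 0 : Matrix (Fin 6) (Fin 6) ℝ), Mg 0 0 0 0 1 0 0 0⁆ = Mg 0 0 0 0 1 0 0 0
  rw [Ring.lie_def, Mg_bracket]
  congr 1 <;> norm_num
lemma rel_be : ⁅EB, EE⁆ = 0 := by
  apply Subtype.ext
  show ⁅(Mg 0 1 0 0 0 0 0 0 : Matrix (Fin 6) (Fin 6) ℝ), Mg 0 0 0 0 1 0 0 0⁆ = 0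
  rw [Ring.lie_def, Mg_bracket, ← Mg_zero]
  congr 1 <;> norm_num
lemma rel_ce : ⁅EC, EE⁆ = EG := by
  apply Subtype.ext
  show ⁅(Mg 0 0 1 0 0 0 0 0 : Matrix (Fin 6) (Fin 6) ℝ), Mg 0 0 0 0 1 0 0 0⁆ = Mg 0 0 0 0 0 0 1 0
  rw [Ring.lie_def, Mg_bracket]
  congr 1 <;> norm_num
lemma rel_ag : ⁅EA, EG⁆ = -EG := by
  apply Subtype.ext
  show ⁅(Mg 1 0 0 0 0 0 0 0 : Matrix (Fin 6) (Fin 6) ℝ), Mg 0 0 0 0 0 0 1 0⁆ = -(Mg 0 0 0 0 0 0 1 0)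
  rw [Ring.lie_def, Mg_bracket, Mg_neg]
  congr 1 <;> norm_num
lemma rel_bg : ⁅EB, EG⁆ = EE := by
  apply Subtype.ext
  show ⁅(Mg 0 1 0 0 0 0 0 0 : Matrix (Fin 6) (Fin 6) ℝ), Mg 0 0 0 0 0 0 1 0⁆ = Mg 0 0 0 0 1 0 0 0
  rw [Ring.lie_def, Mg_bracket]
  congr 1 <;> norm_num
lemma rel_cg : ⁅EC, EG⁆ = 0 := by
  apply Subtype.ext
  show ⁅(Mg 0 0 1 0 0 0 0 0 : Matrix (Fin 6) (Fin 6) ℝ), Mg 0 0 0 0 0 0 1 0⁆ = 0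
  rw [Ring.lie_def, Mg_bracket, ← Mg_zero]
  congr 1 <;> norm_num
lemma rel_ah : ⁅EA, EH⁆ = 0 := by
  apply Subtype.ext
  show ⁅(Mg 1 0 0 0 0 0 0 0 : Matrix (Fin 6) (Fin 6) ℝ), Mg 0 0 0 0 0 0 0 1⁆ = 0
  rw [Ring.lie_def, Mg_bracket, ← Mg_zero]
  congr 1 <;> norm_num
lemma rel_bh : ⁅EB, EH⁆ = 0 := by
  apply Subtype.ext
  show ⁅(Mg 0 1 0 0 0 0 0 0 : Matrix (Fin 6) (Fin 6) ℝ), Mg 0 0 0 0 0 0 0 1⁆ = 0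
  rw [Ring.lie_def, Mg_bracket, ← Mg_zero]
  congr 1 <;> norm_num
lemma rel_ch : ⁅EC, EH⁆ = 0 := by
  apply Subtype.ext
  show ⁅(Mg 0 0 1 0 0 0 0 0 : Matrix (Fin 6) (Fin 6) ℝ), Mg 0 0 0 0 0 0 0 1⁆ = 0
  rw [Ring.lie_def, Mg_bracket, ← Mg_zero]
  congr 1 <;> norm_num
lemma rel_df : ⁅ED, EF⁆ = -EH := by
  apply Subtype.ext
  show ⁅(Mg 0 0 0 1 0 0 0 0 : Matrix (Fin 6) (Fin 6) ℝ), Mg 0 0 0 0 0 1 0 0⁆ = -(Mg 0 0 0 0 0 0 0 1)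
  rw [Ring.lie_def, Mg_bracket, Mg_neg]
  congr 1 <;> norm_num
lemma rel_dh : ⁅ED, EH⁆ = EE + EE + EE := by
  apply Subtype.ext
  show ⁅(Mg 0 0 0 1 0 0 0 0 : Matrix (Fin 6) (Fin 6) ℝ), Mg 0 0 0 0 0 0 0 1⁆ = Mg 0 0 0 0 1 0 0 0 + Mg 0 0 0 0 1 0 0 0 + Mg 0 0 0 0 1 0 0 0
  rw [Ring.lie_def, Mg_bracket, Mg_add, Mg_add]
  congr 1 <;> norm_num
lemma rel_fh : ⁅EF, EH⁆ = EG + EG + EG := by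
  apply Subtype.ext
  show ⁅(Mg 0 0 0 0 0 1 0 0 : Matrix (Fin 6) (Fin 6) ℝ), Mg 0 0 0 0 0 0 0 1⁆ = Mg 0 0 0 0 0 0 1 0 + Mg 0 0 0 0 0 0 1 0 + Mg 0 0 0 0 0 0 1 0
  rw [Ring.lie_def, Mg_bracket, Mg_add, Mg_add]
  congr 1 <;> norm_num
lemma rel_de : ⁅ED, EE⁆ = 0 := by
  apply Subtype.ext
  show ⁅(Mg 0 0 0 1 0 0 0 0 : Matrix (Fin 6) (Fin 6) ℝ), Mg 0 0 0 0 1 0 0 0⁆ = 0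
  rw [Ring.lie_def, Mg_bracket, ← Mg_zero]
  congr 1 <;> norm_num
lemma rel_dg : ⁅ED, EG⁆ = 0 := by
  apply Subtype.ext
  show ⁅(Mg 0 0 0 1 0 0 0 0 : Matrix (Fin 6) (Fin 6) ℝ), Mg 0 0 0 0 0 0 1 0⁆ = 0
  rw [Ring.lie_def, Mg_bracket, ← Mg_zero]
  congr 1 <;> norm_num
lemma rel_fe : ⁅EF, EE⁆ = 0 := by
  apply Subtype.ext
  show ⁅(Mg 0 0 0 0 0 1 0 0 : Matrix (Fin 6) (Fin 6) ℝ), Mg 0 0 0 0 1 0 0 0⁆ = 0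
  rw [Ring.lie_def, Mg_bracket, ← Mg_zero]
  congr 1 <;> norm_num
lemma rel_fg : ⁅EF, EG⁆ = 0 := by
  apply Subtype.ext
  show ⁅(Mg 0 0 0 0 0 1 0 0 : Matrix (Fin 6) (Fin 6) ℝ), Mg 0 0 0 0 0 0 1 0⁆ = 0
  rw [Ring.lie_def, Mg_bracket, ← Mg_zero]
  congr 1 <;> norm_num
lemma rel_eg : ⁅EE, EG⁆ = 0 := by
  apply Subtype.ext
  show ⁅(Mg 0 0 0 0 1 0 0 0 : Matrix (Fin 6) (Fin 6) ℝ), Mg 0 0 0 0 0 0 1 0⁆ = 0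
  rw [Ring.lie_def, Mg_bracket, ← Mg_zero]
  congr 1 <;> norm_num
lemma rel_eh : ⁅EE, EH⁆ = 0 := by
  apply Subtype.ext
  show ⁅(Mg 0 0 0 0 1 0 0 0 : Matrix (Fin 6) (Fin 6) ℝ), Mg 0 0 0 0 0 0 0 1⁆ = 0
  rw [Ring.lie_def, Mg_bracket, ← Mg_zero]
  congr 1 <;> norm_num
lemma rel_gh : ⁅EG, EH⁆ = 0 := by
  apply Subtype.ext
  show ⁅(Mg 0 0 0 0 0 0 1 0 : Matrix (Fin 6) (Fin 6) ℝ), Mg 0 0 0 0 0 0 0 1⁆ = 0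
  rw [Ring.lie_def, Mg_bracket, ← Mg_zero]
  congr 1 <;> norm_num

theorem L815_no_embedding :
    ¬ ∃ φ : ↥L815 →ₗ⁅ℝ⁆ Matrix (Fin 5) (Fin 5) ℝ, Function.Injective φ := by
  rintro ⟨φ, hinj⟩
  have RM : Rels (φ EA) (φ EB) (φ EC) (φ ED) (φ EF) (φ EH) (φ EE) (φ EG) :=
    {
      ab := by rw [← Ring.lie_def, ← LieHom.map_lie, rel_ab, map_add φ]
      ac := by rw [← Ring.lie_def, ← LieHom.map_lie, rel_ac, map_neg φ, map_add φ]
      bc := by rw [← Ring.lie_def, ← LieHom.map_lie, rel_bc]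
      ad := by rw [← Ring.lie_def, ← LieHom.map_lie, rel_ad]
      bd := by rw [← Ring.lie_def, ← LieHom.map_lie, rel_bd, map_zero φ]
      cd := by rw [← Ring.lie_def, ← LieHom.map_lie, rel_cd]
      af := by rw [← Ring.lie_def, ← LieHom.map_lie, rel_af, map_neg φ]
      bf := by rw [← Ring.lie_def, ← LieHom.map_lie, rel_bf]
      cf := by rw [← Ring.lie_def, ← LieHom.map_lie, rel_cf, map_zero φ]
      ae := by rw [← Ring.lie_def, ← LieHom.map_lie, rel_ae]
      be := by rw [← Ring.lie_def, ← LieHom.map_lie, rel_be, map_zero φ]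
      ce := by rw [← Ring.lie_def, ← LieHom.map_lie, rel_ce]
      ag := by rw [← Ring.lie_def, ← LieHom.map_lie, rel_ag, map_neg φ]
      bg := by rw [← Ring.lie_def, ← LieHom.map_lie, rel_bg]
      cg := by rw [← Ring.lie_def, ← LieHom.map_lie, rel_cg, map_zero φ]
      ah := by rw [← Ring.lie_def, ← LieHom.map_lie, rel_ah, map_zero φ]
      bh := by rw [← Ring.lie_def, ← LieHom.map_lie, rel_bh, map_zero φ]
      ch := by rw [← Ring.lie_def, ← LieHom.map_lie, rel_ch, map_zero φ]
      df := by rw [← Ring.lie_def, ← LieHom.map_lie, rel_df, map_neg φ]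
      dh := by rw [← Ring.lie_def, ← LieHom.map_lie, rel_dh, map_add φ, map_add φ]
      fh := by rw [← Ring.lie_def, ← LieHom.map_lie, rel_fh, map_add φ, map_add φ]
      de := by rw [← Ring.lie_def, ← LieHom.map_lie, rel_de, map_zero φ]
      dg := by rw [← Ring.lie_def, ← LieHom.map_lie, rel_dg, map_zero φ]
      fe := by rw [← Ring.lie_def, ← LieHom.map_lie, rel_fe, map_zero φ]
      fg := by rw [← Ring.lie_def, ← LieHom.map_lie, rel_fg, map_zero φ]
      eg := by rw [← Ring.lie_def, ← LieHom.map_lie, rel_eg, map_zero φ]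
      eh := by rw [← Ring.lie_def, ← LieHom.map_lie, rel_eh, map_zero φ]
      gh := by rw [← Ring.lie_def, ← LieHom.map_lie, rel_gh, map_zero φ]
    }
  set π : Matrix (Fin 5) (Fin 5) ℝ ≃+* Module.End ℝ (Fin 5 → ℝ) :=
    (Matrix.toLinAlgEquiv' : Matrix (Fin 5) (Fin 5) ℝ ≃ₐ[ℝ] _).toRingEquiv with hπ
  have RE := RM.ringMap π
  have he0 : π (φ EE) = 0 :=
    main815 5 (Fin 5 → ℝ) inferInstance inferInstance inferInstance
      (Module.finrank_fin_fun ℝ) (by norm_num) _ _ _ _ _ _ _ _ RE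
  have hφE : φ EE = 0 := by
    apply π.injective
    rw [he0, map_zero]
  have hEE : EE = 0 := hinj (by rw [hφE, map_zero φ])
  have hval := congrArg Subtype.val hEE
  have h05 : Mg 0 0 0 0 1 0 0 0 0 5 = (0 : Matrix (Fin 6) (Fin 6) ℝ) 0 5 :=
    congrFun (congrFun hval 0) 5
  rw [Mg_05, Matrix.zero_apply] at h05
  norm_num at h05

end Application

/-- Turkowski's algebra `L_{8.15}` (radical the nilpotent algebra `A_{5.3}`): an
8-dimensional Lie subalgebra of `gl(6, ℝ)` admitting no faithful representation in
`gl(5, ℝ)`. -/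
theorem L815_minimal :
    ∃ L : LieSubalgebra ℝ (Matrix (Fin 6) (Fin 6) ℝ),
      (L : Set (Matrix (Fin 6) (Fin 6) ℝ)) =
        {M | ∃ a b c d e f g h : ℝ,
          M = !![a, b, -h, 0, d, e;
                 c, -a, 0, -h, f, g;
                 0, 0, a, b, 0, d;
                 0, 0, c, -a, 0, f;
                 0, 0, f, -d, 0, 2 * h;
                 0, 0, 0, 0, 0, 0]} ∧
      Module.finrank ℝ ↥L = 8 ∧
      ¬ ∃ φ : ↥L →ₗ⁅ℝ⁆ Matrix (Fin 5) (Fin 5) ℝ, Function.Injective φ :=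
  ⟨L815, rfl, L815_finrank, L815_no_embedding⟩
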